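/- arXiv:1809.10567 — 3 statements merged into one kernel-verified Lean document; each statement's English description precedes it below -/
import Mathlib

section
/- Any algorithm on the ball $\mathcal{B}_\rho$ achieving error at most $\varepsilon$ for all inputs must use at least $\min\{n : \lambda_{n+1} \le \varepsilon/\rho\}$ linear functional evaluations when applied to the zero function. Specifically, if $A$ uses $N$ linear functionals on input $0$ and satisfies $\|S(f) - A(f)\| \le \varepsilon$ for all $\|f\| \le \rho$, then $\lambda_{N+1} \le \varepsilon/\rho$. -/
/-!
The `N` functionals have a common nonzero zero `f` in the `(N+1)`-dimensional span of
`u 0, …, u N`; rescale it to `g` with `‖g‖ = ρ`. The algorithm receives the same data on `g`,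
`-g` and `0`, so the single output `A 0` is within `ε` of both `S g` and `-S g`, forcing
`‖S g‖ ≤ ε`. On the other hand `S` stretches that span by at least `lam N`, by Bessel's
inequality for `v`, so `lam N * ρ ≤ ‖S g‖ ≤ ε`.
-/

open scoped RealInnerProductSpace

open Submodule Set

theorem exists_mem_span_ne_zero_forall_apply_eq_zero {K E ι κ : Type*} [Field K] [AddCommGroup E]
    [Module K E] [Fintype ι] [Fintype κ] {w : ι → E} (hw : LinearIndependent K w)
    (hcard : Fintype.card κ < Fintype.card ι) (L : κ → E →ₗ[K] K) :
    ∃ f ∈ span K (range w), f ≠ 0 ∧ ∀ k, L k f = 0 := by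
  have : FiniteDimensional K (span K (range w)) :=
    FiniteDimensional.span_of_finite K (finite_range w)
  have hker : LinearMap.ker ((LinearMap.pi L).domRestrict (span K (range w))) ≠ ⊥ :=
    LinearMap.ker_ne_bot_of_finrank_lt (by simpa [finrank_span_eq_card hw] using hcard)
  obtain ⟨⟨f, hf⟩, hfker, hf0⟩ := (Submodule.ne_bot_iff _).mp hker
  refine ⟨f, hf, fun h => hf0 (Subtype.ext h), fun k => ?_⟩
  simpa using congrFun (LinearMap.mem_ker.mp hfker) k

theorem norm_le_of_norm_sub_le_of_norm_neg_sub_le {E : Type*} [SeminormedAddCommGroup E]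
    [NormedSpace ℝ E] {x a : E} {ε : ℝ} (h₁ : ‖x - a‖ ≤ ε) (h₂ : ‖-x - a‖ ≤ ε) : ‖x‖ ≤ ε := by
  have h : (2 : ℝ) • x = (x - a) - (-x - a) := by module
  have : 2 * ‖x‖ ≤ ε + ε := by
    calc 2 * ‖x‖ = ‖(2 : ℝ) • x‖ := by rw [norm_smul, Real.norm_two]
      _ ≤ ‖x - a‖ + ‖-x - a‖ := h ▸ norm_sub_le _ _
      _ ≤ ε + ε := add_le_add h₁ h₂
  linarith

theorem mul_norm_le_norm_of_inner_eq_mul_inner {F G ι : Type*} [NormedAddCommGroup F]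
    [InnerProductSpace ℝ F] [NormedAddCommGroup G] [InnerProductSpace ℝ G] [Fintype ι]
    {u : ι → F} {v : ι → G} (hu : Orthonormal ℝ u) (hv : Orthonormal ℝ v) {lam : ι → ℝ} {m : ℝ}
    (hm : 0 ≤ m) (hlam : ∀ i, m ≤ lam i) {f : F} (hf : f ∈ span ℝ (range u)) {y : G}
    (hy : ∀ i, ⟪y, v i⟫ = lam i * ⟪f, u i⟫) : m * ‖f‖ ≤ ‖y‖ := by
  obtain ⟨c, rfl⟩ := (mem_span_range_iff_exists_fun ℝ).mp hf
  have hcoef : ∀ i, ⟪∑ j, c j • u j, u i⟫ = c i := hu.inner_left_fintype c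
  have hnorm : ‖∑ i, c i • u i‖ ^ 2 = ∑ i, c i ^ 2 := by
    simpa [← real_inner_self_eq_norm_sq, sq] using hu.inner_sum c c Finset.univ
  have hbessel : ∑ i, ⟪v i, y⟫ ^ 2 ≤ ‖y‖ ^ 2 := by
    simpa using hv.sum_inner_products_le y (s := Finset.univ)
  refine (pow_le_pow_iff_left₀ (by positivity) (norm_nonneg y) two_ne_zero).mp ?_
  calc (m * ‖∑ i, c i • u i‖) ^ 2 = ∑ i, m ^ 2 * c i ^ 2 := by
        rw [mul_pow, hnorm, Finset.mul_sum]
    _ ≤ ∑ i, (lam i * c i) ^ 2 := by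
        gcongr with i
        rw [mul_pow]
        gcongr
        exact hlam i
    _ = ∑ i, ⟪v i, y⟫ ^ 2 := by simp_rw [real_inner_comm, hy, hcoef]
    _ ≤ ‖y‖ ^ 2 := hbessel

/-- Indices are 0-based: `lam N` is the paper's `λ_{N+1}`. -/
theorem stmt_9_general {F G : Type*} [NormedAddCommGroup F] [InnerProductSpace ℝ F]
    [NormedAddCommGroup G] [InnerProductSpace ℝ G]
    (u : HilbertBasis ℕ ℝ F) (v : HilbertBasis ℕ ℝ G)
    (lam : ℕ → ℝ) (hpos : ∀ i, 0 < lam i) (hanti : Antitone lam)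
    (S : F →L[ℝ] G) (hS : ∀ (f : F) (i : ℕ), ⟪S f, v i⟫ = lam i * ⟪f, u i⟫)
    (ρ ε : ℝ) (hρ : 0 < ρ)
    (A : F → G) (N : ℕ) (L : Fin N → F →L[ℝ] ℝ)
    (hA : ∀ f : F, (∀ k, L k f = L k 0) → A f = A 0)
    (herr : ∀ f : F, ‖f‖ ≤ ρ → ‖S f - A f‖ ≤ ε) :
    lam N ≤ ε / ρ := by
  have hu : Orthonormal ℝ fun i : Fin (N + 1) => u i := u.orthonormal.comp _ Fin.val_injective
  obtain ⟨f, hfV, hf0, hLf⟩ := exists_mem_span_ne_zero_forall_apply_eq_zero hu.linearIndependent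
    (by simp) fun k => (L k : F →ₗ[ℝ] ℝ)
  set g := (ρ / ‖f‖) • f
  have hg : ‖g‖ = ρ := by
    rw [norm_smul, Real.norm_of_nonneg (by positivity), div_mul_cancel₀ _ (norm_ne_zero_iff.mpr hf0)]
  have hLg : ∀ k, L k g = 0 := fun k => by simp [g, show L k f = 0 from hLf k]
  have hpos_err : ‖S g - A 0‖ ≤ ε := by simpa [hA g (by simp [hLg])] using herr g hg.le
  have hneg_err : ‖-S g - A 0‖ ≤ ε := by
    simpa [hA (-g) (by simp [hLg])] using herr (-g) (by simpa using hg.le)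
  have hlow : lam N * ‖g‖ ≤ ‖S g‖ :=
    mul_norm_le_norm_of_inner_eq_mul_inner hu (v.orthonormal.comp _ Fin.val_injective)
      (hpos N).le (fun i => hanti (Nat.le_of_lt_succ i.isLt)) (smul_mem _ _ hfV) (fun i => hS g i)
  rw [le_div_iff₀ hρ, ← hg]
  exact hlow.trans (norm_le_of_norm_sub_le_of_norm_neg_sub_le hpos_err hneg_err)

/-- If an algorithm `A` on the ball `B_ρ` uses only the values of `N` linear
functionals (so its output agrees on inputs whose functional values agree with those of `0`)
and achieves error at most `ε` on all of `B_ρ`, then `λ_{N+1} ≤ ε/ρ`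
(0-based indexing: `lam N` is `λ_{N+1}`). -/
theorem stmt_9 {F G : Type*} [NormedAddCommGroup F] [InnerProductSpace ℝ F] [CompleteSpace F]
    [NormedAddCommGroup G] [InnerProductSpace ℝ G] [CompleteSpace G]
    (u : HilbertBasis ℕ ℝ F) (v : HilbertBasis ℕ ℝ G)
    (lam : ℕ → ℝ) (hpos : ∀ i, 0 < lam i) (hanti : Antitone lam)
    (S : F →L[ℝ] G) (hS : ∀ (f : F) (i : ℕ), ⟪S f, v i⟫ = lam i * ⟪f, u i⟫)
    (ρ ε : ℝ) (hρ : 0 < ρ)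
    (A : F → G) (N : ℕ) (L : Fin N → F →L[ℝ] ℝ)
    (hA : ∀ f : F, (∀ k, L k f = L k 0) → A f = A 0)
    (herr : ∀ f : F, ‖f‖ ≤ ρ → ‖S f - A f‖ ≤ ε) :
    lam N ≤ ε / ρ :=
  stmt_9_general u v lam hpos hanti S hS ρ ε hρ A N L hA herr
end

section
/- For any $f$ in the cone $\mathcal{C}$ and any $j \in \mathbb{N}$, the error of the interpolatory algorithm with $n_j$ coefficients satisfies $\|S(f) - A_{n_j}(f)\|_{\mathcal{G}} \le \frac{ab}{\sqrt{1-b^2}} \sigma_j(f)$. -/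
open scoped RealInnerProductSpace

/-- `σ_j(f)`: 0-based indexing, with the `j`-th block of coefficients `n_{j-1} ≤ i < n_j`. -/
noncomputable def sig {F : Type*} [NormedAddCommGroup F] [InnerProductSpace ℝ F]
    (u : HilbertBasis ℕ ℝ F) (lam : ℕ → ℝ) (n : ℕ → ℕ) (j : ℕ) (f : F) : ℝ :=
  Real.sqrt (∑ i ∈ Finset.Ico (n (j - 1)) (n j), (lam i * ⟪f, u i⟫) ^ 2)

/-- For `f` in the cone `C` and any `j ≥ 1`,
`‖S(f) - A_{n_j}(f)‖ ≤ (a b / √(1-b²)) σ_j(f)`. -/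
theorem stmt_12 {F G : Type*} [NormedAddCommGroup F] [InnerProductSpace ℝ F] [CompleteSpace F]
    [NormedAddCommGroup G] [InnerProductSpace ℝ G] [CompleteSpace G]
    (u : HilbertBasis ℕ ℝ F) (v : HilbertBasis ℕ ℝ G)
    (lam : ℕ → ℝ) (hpos : ∀ i, 0 < lam i) (hanti : Antitone lam)
    (S : F →L[ℝ] G) (hS : ∀ (f : F) (i : ℕ), ⟪S f, v i⟫ = lam i * ⟪f, u i⟫)
    (n : ℕ → ℕ) (hn0 : n 0 = 0) (hn : StrictMono n)
    (a b : ℝ) (ha : 1 < a) (hb0 : 0 < b) (hb1 : b < 1)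
    (f : F)
    (hf : ∀ j r : ℕ, 1 ≤ j → 1 ≤ r → sig u lam n (j + r) f ≤ a * b ^ r * sig u lam n j f)
    (j : ℕ) (hj : 1 ≤ j) :
    ‖S f - ∑ i ∈ Finset.range (n j), (lam i * ⟪f, u i⟫) • (v i : G)‖ ≤
      a * b / Real.sqrt (1 - b ^ 2) * sig u lam n j f := by
  set c : ℕ → ℝ := fun i => lam i * ⟪f, u i⟫ with hc
  set g : G := S f - ∑ i ∈ Finset.range (n j), c i • (v i : G) with hg
  have hb2 : (0:ℝ) < 1 - b ^ 2 := by nlinarith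
  have hσ : 0 ≤ sig u lam n j f := Real.sqrt_nonneg _
  -- inner products of g with the basis
  have key : ∀ i, ⟪g, (v i : G)⟫ = if i ∈ Finset.range (n j) then 0 else c i := by
    intro i
    rw [hg, inner_sub_left, hS, sum_inner]
    simp_rw [real_inner_smul_left, orthonormal_iff_ite.mp v.orthonormal]
    simp only [mul_ite, mul_one, mul_zero, Finset.sum_ite_eq' (Finset.range (n j)) i]
    by_cases h : i ∈ Finset.range (n j) <;> simp [h, hc]
  -- Parseval
  have hsummable : Summable (fun i => ⟪g, (v i : G)⟫ ^ 2) := by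
    have := v.summable_inner_mul_inner g g
    simpa [real_inner_comm, sq] using this
  have hpar : ‖g‖ ^ 2 = ∑' i, ⟪g, (v i : G)⟫ ^ 2 := by
    have := v.tsum_inner_mul_inner g g
    rw [real_inner_self_eq_norm_sq] at this
    rw [← this]
    congr 1; ext i; rw [real_inner_comm (v i : G) g, sq]
  -- block sums
  have hsig_sq : ∀ k, (sig u lam n k f) ^ 2
      = ∑ i ∈ Finset.Ico (n (k - 1)) (n k), c i ^ 2 := by
    intro k
    rw [sig, Real.sq_sqrt (Finset.sum_nonneg fun i _ => sq_nonneg _)]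
  have hblock : ∀ R : ℕ, ∑ i ∈ Finset.Ico (n j) (n (j + R)), c i ^ 2
      = ∑ r ∈ Finset.range R, (sig u lam n (j + r + 1) f) ^ 2 := by
    intro R
    induction R with
    | zero => simp
    | succ R ih =>
      rw [Finset.sum_range_succ, ← ih, hsig_sq]
      have h1 : n j ≤ n (j + R) := hn.monotone (by omega)
      have h2 : n (j + R) ≤ n (j + R + 1) := hn.monotone (by omega)
      have e1 : j + (R + 1) = j + R + 1 := by omega
      have e2 : j + R + 1 - 1 = j + R := by omega
      rw [e1, e2, Finset.sum_Ico_consecutive _ h1 h2]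
  -- geometric bound on block sums
  have hgeom : ∀ R : ℕ, ∑ r ∈ Finset.range R, (sig u lam n (j + r + 1) f) ^ 2
      ≤ a ^ 2 * b ^ 2 / (1 - b ^ 2) * (sig u lam n j f) ^ 2 := by
    intro R
    have h1 : ∑ r ∈ Finset.range R, (sig u lam n (j + r + 1) f) ^ 2
        ≤ ∑ r ∈ Finset.range R, a ^ 2 * (b ^ 2) ^ (r + 1) * (sig u lam n j f) ^ 2 := by
      apply Finset.sum_le_sum
      intro r _
      have h := hf j (r + 1) hj (by omega)
      have hσr : 0 ≤ sig u lam n (j + (r + 1)) f := Real.sqrt_nonneg _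
      have habr : 0 ≤ a * b ^ (r + 1) * sig u lam n j f := by positivity
      calc (sig u lam n (j + r + 1) f) ^ 2 = (sig u lam n (j + (r + 1)) f) ^ 2 := by
            ring_nf
        _ ≤ (a * b ^ (r + 1) * sig u lam n j f) ^ 2 := by
            apply pow_le_pow_left₀ hσr h
        _ = a ^ 2 * (b ^ 2) ^ (r + 1) * (sig u lam n j f) ^ 2 := by ring
    have h2 : ∑ r ∈ Finset.range R, (b ^ 2) ^ (r + 1) ≤ b ^ 2 / (1 - b ^ 2) := by
      have hb2lt : b ^ 2 < 1 := by nlinarith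
      have hb2nn : (0:ℝ) ≤ b ^ 2 := sq_nonneg b
      have : ∑ r ∈ Finset.range R, (b ^ 2) ^ (r + 1)
          = b ^ 2 * ∑ r ∈ Finset.range R, (b ^ 2) ^ r := by
        rw [Finset.mul_sum]; congr 1; ext r; ring
      rw [this]
      have hle : ∑ r ∈ Finset.range R, (b ^ 2) ^ r ≤ (1 - b ^ 2)⁻¹ := by
        have := Summable.sum_le_tsum (Finset.range R)
          (fun i _ => pow_nonneg hb2nn i) (summable_geometric_of_lt_one hb2nn hb2lt)
        rwa [tsum_geometric_of_lt_one hb2nn hb2lt] at this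
      rw [div_eq_mul_inv]
      exact mul_le_mul_of_nonneg_left hle hb2nn
    calc ∑ r ∈ Finset.range R, (sig u lam n (j + r + 1) f) ^ 2
        ≤ ∑ r ∈ Finset.range R, a ^ 2 * (b ^ 2) ^ (r + 1) * (sig u lam n j f) ^ 2 := h1
      _ = a ^ 2 * (sig u lam n j f) ^ 2 * ∑ r ∈ Finset.range R, (b ^ 2) ^ (r + 1) := by
          rw [Finset.mul_sum]; congr 1; ext r; ring
      _ ≤ a ^ 2 * (sig u lam n j f) ^ 2 * (b ^ 2 / (1 - b ^ 2)) := by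
          apply mul_le_mul_of_nonneg_left h2 (by positivity)
      _ = a ^ 2 * b ^ 2 / (1 - b ^ 2) * (sig u lam n j f) ^ 2 := by ring
  -- bound the tsum by finite sums
  have htsum : ∑' i, ⟪g, (v i : G)⟫ ^ 2
      ≤ a ^ 2 * b ^ 2 / (1 - b ^ 2) * (sig u lam n j f) ^ 2 := by
    apply Summable.tsum_le_of_sum_le hsummable
    intro s
    have hsub : s.filter (fun i => n j ≤ i) ⊆ Finset.Ico (n j) (n (j + (s.sup id + 1))) := by
      intro i hi
      simp only [Finset.mem_filter] at hi
      rw [Finset.mem_Ico]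
      refine ⟨hi.2, lt_of_le_of_lt (Finset.le_sup (f := id) hi.1) ?_⟩
      calc (s.sup id : ℕ) < j + (s.sup id + 1) := by omega
        _ ≤ n (j + (s.sup id + 1)) := hn.le_apply
    calc ∑ i ∈ s, ⟪g, (v i : G)⟫ ^ 2
        = ∑ i ∈ s.filter (fun i => n j ≤ i), c i ^ 2 := by
          rw [Finset.sum_filter]
          apply Finset.sum_congr rfl
          intro i _
          rw [key i]
          by_cases h : n j ≤ i
          · simp [h, Finset.mem_range, not_lt.mpr h]
          · simp [h, Finset.mem_range, lt_of_not_ge h]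
      _ ≤ ∑ i ∈ Finset.Ico (n j) (n (j + (s.sup id + 1))), c i ^ 2 :=
          Finset.sum_le_sum_of_subset_of_nonneg hsub (fun i _ _ => sq_nonneg _)
      _ ≤ a ^ 2 * b ^ 2 / (1 - b ^ 2) * (sig u lam n j f) ^ 2 := by
          rw [hblock]; exact hgeom _
  -- conclude
  have hnormsq : ‖g‖ ^ 2 ≤ (a * b / Real.sqrt (1 - b ^ 2) * sig u lam n j f) ^ 2 := by
    rw [hpar]
    refine htsum.trans_eq ?_
    rw [mul_pow, div_pow, mul_pow, Real.sq_sqrt hb2.le]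
  have hC : 0 ≤ a * b / Real.sqrt (1 - b ^ 2) * sig u lam n j f := by positivity
  calc ‖g‖ = Real.sqrt (‖g‖ ^ 2) := by rw [Real.sqrt_sq (norm_nonneg _)]
    _ ≤ Real.sqrt ((a * b / Real.sqrt (1 - b ^ 2) * sig u lam n j f) ^ 2) :=
        Real.sqrt_le_sqrt hnormsq
    _ = a * b / Real.sqrt (1 - b ^ 2) * sig u lam n j f := Real.sqrt_sq hC
end

section
/- For $f$ in the cone $\mathcal{C}$ with $\|f\|_{\mathcal{F}} \le \rho$, for every $j \ge 1$: $\rho^2 \ge \sigma_j(f)^2 \left[ \sum_{k=1}^{j-1} \frac{b^{2(k-j)}}{a^2 \lambda_{n_{k-1}+1}^2} + \frac{1}{\lambda_{n_{j-1}+1}^2} \right]$. -/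
open scoped RealInnerProductSpace

/-!
Write `E_k` for the energy `∑ ⟪f, u_i⟫²` of `f` on the `k`-th block. Since `λ` is antitone,
`σ_k² ≤ λ_{n_{k-1}+1}² E_k`; for `k < j` the cone condition `σ_j ≤ a b^{j-k} σ_k` then bounds the
`k`-th term of the bracket, multiplied by `σ_j²`, by `E_k`, and the last term by `E_j`. The blocks
are disjoint, so Bessel's inequality gives `∑_{k ≤ j} E_k ≤ ‖f‖² ≤ ρ²`.
-/

section BlockEnergy

variable {F : Type*} [NormedAddCommGroup F] [InnerProductSpace ℝ F]
  (u : HilbertBasis ℕ ℝ F) (n : ℕ → ℕ) (f : F)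

noncomputable def blockEnergy (k : ℕ) : ℝ :=
  ∑ i ∈ Finset.Ico (n (k - 1)) (n k), ⟪f, u i⟫ ^ 2

lemma blockEnergy_nonneg (k : ℕ) : 0 ≤ blockEnergy u n f k :=
  Finset.sum_nonneg fun _ _ => sq_nonneg _

lemma sum_blockEnergy_eq {n : ℕ → ℕ} (hn : Monotone n) (j : ℕ) :
    ∑ k ∈ Finset.Ico 1 (j + 1), blockEnergy u n f k =
      ∑ i ∈ Finset.Ico (n 0) (n j), ⟪f, u i⟫ ^ 2 := by
  induction j with
  | zero => simp
  | succ j ih =>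
    rw [Finset.sum_Ico_succ_top (by omega), ih, blockEnergy, Nat.add_sub_cancel,
      Finset.sum_Ico_consecutive _ (hn j.zero_le) (hn j.le_succ)]

lemma sum_blockEnergy_le_norm_sq {n : ℕ → ℕ} (hn : Monotone n) (j : ℕ) :
    ∑ k ∈ Finset.Ico 1 (j + 1), blockEnergy u n f k ≤ ‖f‖ ^ 2 := by
  rw [sum_blockEnergy_eq u f hn]
  simpa [Real.norm_eq_abs, sq_abs, real_inner_comm] using
    u.orthonormal.sum_inner_products_le f (s := Finset.Ico (n 0) (n j))

lemma sig_sq_eq (lam : ℕ → ℝ) (k : ℕ) :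
    sig u lam n k f ^ 2 = ∑ i ∈ Finset.Ico (n (k - 1)) (n k), (lam i * ⟪f, u i⟫) ^ 2 :=
  Real.sq_sqrt (Finset.sum_nonneg fun _ _ => sq_nonneg _)

lemma sig_sq_le_mul_blockEnergy {lam : ℕ → ℝ} (hnonneg : ∀ i, 0 ≤ lam i) (hanti : Antitone lam)
    (k : ℕ) : sig u lam n k f ^ 2 ≤ blockEnergy u n f k * lam (n (k - 1)) ^ 2 := by
  rw [sig_sq_eq, blockEnergy, Finset.sum_mul]
  refine Finset.sum_le_sum fun i hi => ?_
  have hlam : lam i ^ 2 ≤ lam (n (k - 1)) ^ 2 :=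
    pow_le_pow_left₀ (hnonneg i) (hanti (Finset.mem_Ico.mp hi).1) 2
  rw [mul_pow, mul_comm]
  exact mul_le_mul_of_nonneg_left hlam (sq_nonneg _)

lemma sig_sq_div_le_blockEnergy {lam : ℕ → ℝ} (hnonneg : ∀ i, 0 ≤ lam i) (hanti : Antitone lam)
    (k : ℕ) : sig u lam n k f ^ 2 * (1 / lam (n (k - 1)) ^ 2) ≤ blockEnergy u n f k := by
  rw [mul_one_div]
  exact div_le_of_le_mul₀ (sq_nonneg _) (blockEnergy_nonneg u n f k)
    (sig_sq_le_mul_blockEnergy u n f hnonneg hanti k)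

lemma sig_sq_mul_weight_le_blockEnergy {lam : ℕ → ℝ} (hnonneg : ∀ i, 0 ≤ lam i)
    (hanti : Antitone lam) {a b : ℝ} {k r : ℕ}
    (hcone : sig u lam n (k + r) f ≤ a * b ^ r * sig u lam n k f) :
    sig u lam n (k + r) f ^ 2 *
        (b ^ (2 * ((k : ℤ) - ((k + r : ℕ) : ℤ))) / (a ^ 2 * lam (n (k - 1)) ^ 2)) ≤
      blockEnergy u n f k := by
  have hzpow : b ^ (2 * ((k : ℤ) - ((k + r : ℕ) : ℤ))) = (b ^ (2 * r))⁻¹ := by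
    rw [show 2 * ((k : ℤ) - ((k + r : ℕ) : ℤ)) = -((2 * r : ℕ) : ℤ) by push_cast; ring,
      zpow_neg, zpow_natCast]
  have hsq : sig u lam n (k + r) f ^ 2 ≤ (a * b ^ r) ^ 2 * sig u lam n k f ^ 2 := by
    rw [← mul_pow]
    exact pow_le_pow_left₀ (Real.sqrt_nonneg _) hcone 2
  have hweight : sig u lam n (k + r) f ^ 2 *
      (b ^ (2 * ((k : ℤ) - ((k + r : ℕ) : ℤ))) / (a ^ 2 * lam (n (k - 1)) ^ 2)) =
        sig u lam n (k + r) f ^ 2 / (a * b ^ r) ^ 2 / lam (n (k - 1)) ^ 2 := by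
    rw [hzpow]; ring
  rw [hweight]
  refine div_le_of_le_mul₀ (sq_nonneg _) (blockEnergy_nonneg u n f k) ?_
  calc sig u lam n (k + r) f ^ 2 / (a * b ^ r) ^ 2
      ≤ sig u lam n k f ^ 2 := div_le_of_le_mul₀ (sq_nonneg _) (sq_nonneg _) (by rwa [mul_comm])
    _ ≤ blockEnergy u n f k * lam (n (k - 1)) ^ 2 :=
        sig_sq_le_mul_blockEnergy u n f hnonneg hanti k

end BlockEnergy

theorem stmt_14_general {F : Type*} [NormedAddCommGroup F] [InnerProductSpace ℝ F]
    (u : HilbertBasis ℕ ℝ F)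
    (lam : ℕ → ℝ) (hpos : ∀ i, 0 < lam i) (hanti : Antitone lam)
    (n : ℕ → ℕ) (hn : StrictMono n)
    (a b : ℝ)
    (f : F)
    (hf : ∀ j r : ℕ, 1 ≤ j → 1 ≤ r → sig u lam n (j + r) f ≤ a * b ^ r * sig u lam n j f)
    (ρ : ℝ) (hρ : ‖f‖ ≤ ρ)
    (j : ℕ) (hj : 1 ≤ j) :
    sig u lam n j f ^ 2 *
        (∑ k ∈ Finset.Ico 1 j, b ^ (2 * ((k : ℤ) - (j : ℤ))) / (a ^ 2 * lam (n (k - 1)) ^ 2) +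
          1 / lam (n (j - 1)) ^ 2) ≤ ρ ^ 2 := by
  have hnonneg : ∀ i, 0 ≤ lam i := fun i => (hpos i).le
  have hterm : ∀ k ∈ Finset.Ico 1 j, sig u lam n j f ^ 2 *
      (b ^ (2 * ((k : ℤ) - (j : ℤ))) / (a ^ 2 * lam (n (k - 1)) ^ 2)) ≤ blockEnergy u n f k := by
    intro k hk
    obtain ⟨hk1, hkj⟩ := Finset.mem_Ico.mp hk
    obtain ⟨r, rfl⟩ := Nat.exists_eq_add_of_lt hkj
    exact sig_sq_mul_weight_le_blockEnergy u n f hnonneg hanti (hf k (r + 1) hk1 r.succ_pos)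
  calc _ = ∑ k ∈ Finset.Ico 1 j, sig u lam n j f ^ 2 *
          (b ^ (2 * ((k : ℤ) - (j : ℤ))) / (a ^ 2 * lam (n (k - 1)) ^ 2)) +
        sig u lam n j f ^ 2 * (1 / lam (n (j - 1)) ^ 2) := by rw [mul_add, Finset.mul_sum]
    _ ≤ ∑ k ∈ Finset.Ico 1 j, blockEnergy u n f k + blockEnergy u n f j :=
        add_le_add (Finset.sum_le_sum hterm) (sig_sq_div_le_blockEnergy u n f hnonneg hanti j)
    _ = ∑ k ∈ Finset.Ico 1 (j + 1), blockEnergy u n f k := (Finset.sum_Ico_succ_top hj _).symm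
    _ ≤ ‖f‖ ^ 2 := sum_blockEnergy_le_norm_sq u f hn.monotone j
    _ ≤ ρ ^ 2 := pow_le_pow_left₀ (norm_nonneg f) hρ 2

/-- For `f` in the cone `C` with `‖f‖ ≤ ρ` and every `j ≥ 1`,
`ρ² ≥ σ_j(f)² [ ∑_{k=1}^{j-1} b^{2(k-j)}/(a² λ_{n_{k-1}+1}²) + 1/λ_{n_{j-1}+1}² ]`
(0-based indexing: `lam (n (k-1))` is `λ_{n_{k-1}+1}`). -/
theorem stmt_14 {F : Type*} [NormedAddCommGroup F] [InnerProductSpace ℝ F] [CompleteSpace F]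
    (u : HilbertBasis ℕ ℝ F)
    (lam : ℕ → ℝ) (hpos : ∀ i, 0 < lam i) (hanti : Antitone lam)
    (n : ℕ → ℕ) (hn0 : n 0 = 0) (hn : StrictMono n)
    (a b : ℝ) (ha : 1 < a) (hb0 : 0 < b) (hb1 : b < 1)
    (f : F)
    (hf : ∀ j r : ℕ, 1 ≤ j → 1 ≤ r → sig u lam n (j + r) f ≤ a * b ^ r * sig u lam n j f)
    (ρ : ℝ) (hρ : ‖f‖ ≤ ρ)
    (j : ℕ) (hj : 1 ≤ j) :
    sig u lam n j f ^ 2 *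
        (∑ k ∈ Finset.Ico 1 j, b ^ (2 * ((k : ℤ) - (j : ℤ))) / (a ^ 2 * lam (n (k - 1)) ^ 2) +
          1 / lam (n (j - 1)) ^ 2) ≤ ρ ^ 2 :=
  stmt_14_general u lam hpos hanti n hn a b f hf ρ hρ j hj
end
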